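/- Let Q be symmetric positive definite, a ≠ 0, and α = (aᵀc - b)/√(aᵀQa) with -1/n < α < 1 and n ≥ 2. Then the matrix R = δ(Q - σ·(Qa aᵀQ)/(aᵀQa)) with δ = n²/(n²-1)·(1-α²) and σ = 2(1+nα)/((n+1)(1+α)) is symmetric positive definite. -/

import Mathlib

open Matrix

lemma qf_pos (n : ℕ) (Q : Matrix (Fin n) (Fin n) ℝ) (hQ : Q.PosDef)
    {x : Fin n → ℝ} (hx : x ≠ 0) : 0 < x ⬝ᵥ Q *ᵥ x := by
  simpa using hQ.dotProduct_mulVec_pos hx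

lemma cs (n : ℕ) (Q : Matrix (Fin n) (Fin n) ℝ) (hQ : Q.PosDef)
    (a x : Fin n → ℝ) (ha : a ≠ 0) :
    (a ⬝ᵥ Q *ᵥ x) ^ 2 ≤ (a ⬝ᵥ Q *ᵥ a) * (x ⬝ᵥ Q *ᵥ x) := by
  have hqa : 0 < a ⬝ᵥ Q *ᵥ a := qf_pos n Q hQ ha
  set t : ℝ := (a ⬝ᵥ Q *ᵥ x) / (a ⬝ᵥ Q *ᵥ a) with ht
  have hQT : Qᵀ = Q := by simpa using hQ.1.eq
  have hsym : x ⬝ᵥ Q *ᵥ a = a ⬝ᵥ Q *ᵥ x := by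
    rw [dotProduct_mulVec, ← mulVec_transpose, hQT, dotProduct_comm]
  have key : 0 ≤ (x - t • a) ⬝ᵥ Q *ᵥ (x - t • a) := by
    have := hQ.posSemidef.dotProduct_mulVec_nonneg (x - t • a); rwa [star_trivial] at this
  have expand : (x - t • a) ⬝ᵥ Q *ᵥ (x - t • a)
      = x ⬝ᵥ Q *ᵥ x - 2 * t * (a ⬝ᵥ Q *ᵥ x) + t ^ 2 * (a ⬝ᵥ Q *ᵥ a) := by
    simp only [mulVec_sub, mulVec_smul, dotProduct_sub, sub_dotProduct,
      dotProduct_smul, smul_dotProduct, smul_eq_mul, hsym]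
    ring
  rw [expand] at key
  have h2 : t * (a ⬝ᵥ Q *ᵥ a) = a ⬝ᵥ Q *ᵥ x := by
    rw [ht]; field_simp
  nlinarith [mul_nonneg key hqa.le, h2, hqa]

lemma vmv_mulVec (n : ℕ) (u v x : Fin n → ℝ) :
    vecMulVec u v *ᵥ x = (v ⬝ᵥ x) • u := by
  ext i
  simp [mulVec, vecMulVec_apply, dotProduct, Finset.mul_sum, mul_assoc, mul_comm, mul_left_comm]

/-- Positive definiteness of the Löwner-John shape matrix
`R = δ(Q - σ·Qa aᵀQ/(aᵀQa))` for `-1/n < α < 1`, `n ≥ 2`. -/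
theorem loewner_john_shape_posdef (n : ℕ) (hn : 2 ≤ n)
    (Q : Matrix (Fin n) (Fin n) ℝ) (hQ : Q.PosDef)
    (c a : Fin n → ℝ) (ha : a ≠ 0) (b : ℝ)
    (α : ℝ) (hα : α = (a ⬝ᵥ c - b) / Real.sqrt (a ⬝ᵥ Q *ᵥ a))
    (hα₁ : -1 / (n : ℝ) < α) (hα₂ : α < 1)
    (σ δ : ℝ)
    (hσ : σ = 2 * (1 + n * α) / ((n + 1) * (1 + α)))
    (hδ : δ = (n : ℝ) ^ 2 / ((n : ℝ) ^ 2 - 1) * (1 - α ^ 2))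
    (R : Matrix (Fin n) (Fin n) ℝ)
    (hR : R = δ • (Q - (σ / (a ⬝ᵥ Q *ᵥ a)) • vecMulVec (Q *ᵥ a) (Q *ᵥ a))) :
    R.PosDef := by
  have hn2 : (2:ℝ) ≤ (n:ℝ) := by exact_mod_cast hn
  have hqa : 0 < a ⬝ᵥ Q *ᵥ a := qf_pos n Q hQ ha
  have hQT : Qᵀ = Q := by simpa using hQ.1.eq
  -- α > -1
  have hαm1 : -1 < α := by
    have : -1/(n:ℝ) ≥ -1 := by
      rw [ge_iff_le, le_div_iff₀ (by linarith : (0:ℝ) < n)]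
      nlinarith
    linarith
  -- δ > 0
  have hδpos : 0 < δ := by
    rw [hδ]
    have h1 : (0:ℝ) < (n:ℝ)^2 - 1 := by nlinarith
    have h2 : (0:ℝ) < 1 - α^2 := by nlinarith
    positivity
  -- σ < 1
  have hσlt : σ < 1 := by
    rw [hσ, div_lt_one (by nlinarith : (0:ℝ) < ((n:ℝ)+1)*(1+α))]
    nlinarith
  rw [posDef_iff_dotProduct_mulVec]
  constructor
  · -- Hermitian
    show Rᴴ = R
    rw [hR]
    ext i j
    have hq : Q i j = Q j i := congrFun (congrFun hQT j) i
    simp [conjTranspose_apply, Matrix.smul_apply, Matrix.sub_apply, vecMulVec_apply, hq, mul_comm]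
  · intro x hx
    have hqx : 0 < x ⬝ᵥ Q *ᵥ x := qf_pos n Q hQ hx
    have hsym : x ⬝ᵥ Q *ᵥ a = a ⬝ᵥ Q *ᵥ x := by
      rw [dotProduct_mulVec, ← mulVec_transpose, hQT, dotProduct_comm]
    have hcs := cs n Q hQ a x ha
    have hform : star x ⬝ᵥ R *ᵥ x
        = δ * (x ⬝ᵥ Q *ᵥ x - (σ / (a ⬝ᵥ Q *ᵥ a)) * (a ⬝ᵥ Q *ᵥ x)^2) := by
      rw [hR, star_trivial, smul_mulVec, sub_mulVec, smul_mulVec,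
        vmv_mulVec]
      have h1 : (Q *ᵥ a) ⬝ᵥ x = a ⬝ᵥ Q *ᵥ x := by
        rw [dotProduct_comm]; exact hsym
      rw [h1]
      simp only [dotProduct_smul, dotProduct_sub, smul_eq_mul, dotProduct_smul, hsym]
      ring
    rw [hform]
    set s := a ⬝ᵥ Q *ᵥ x
    set qa := a ⬝ᵥ Q *ᵥ a
    have key : σ * s^2 < qa * (x ⬝ᵥ Q *ᵥ x) := by
      rcases le_or_gt σ 0 with h | h
      · nlinarith
      · nlinarith [mul_le_mul_of_nonneg_left hcs h.le,
          mul_pos (by linarith : (0:ℝ) < 1 - σ) (mul_pos hqa hqx)]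
    have : σ / qa * s^2 < x ⬝ᵥ Q *ᵥ x := by
      rw [div_mul_eq_mul_div, div_lt_iff₀ hqa]
      nlinarith
    nlinarith
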